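/- arXiv:1312.2307 — 2 statements merged into one kernel-verified Lean document; each statement's English description precedes it below -/
import Mathlib

section
/- Under the hypotheses of the previous statements (tangency ⟨A_{ℓ,k}(z),z⟩=0, the sums (2/D_ℓ)Σ_k ⟨A_{ℓ,k}(x),A_{ℓ,k}(y)⟩ = 2cos θ γ_ℓ(cos θ) − sin²θ γ'_ℓ(cos θ) and (2/D_ℓ)Σ_k ⟨A_{ℓ,k}(x),y⟩⟨A_{ℓ,k}(y),x⟩ = −sin²θ γ_ℓ(cos θ)), one has (2/D_ℓ) Σ_k ⟨A_{ℓ,k}(x), N⟩⟨A_{ℓ,k}(y), N⟩ = cos θ γ_ℓ(cos θ) − sin²θ γ'_ℓ(cos θ), where N = (x×y)/sin θ. -/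
/-! The product of the triple products `⟪A, x × y⟫ ⟪B, x × y⟫` is the Gram determinant of
`(A, x, y)` against `(B, x, y)`. For unit `x, y` with `A ⟂ x`, `B ⟂ y` it collapses to
`sin²θ ⟪A, B⟫ + cos θ ⟪A, y⟫ ⟪B, x⟫`; dividing by `sin²θ`, summing over `k` and inserting the two
given sums leaves `cos θ γ − sin²θ γ'`. -/

open Real Matrix
open scoped RealInnerProductSpace

theorem dotProduct_cross_mul_dotProduct_cross {R : Type*} [CommRing R] (a b x y : Fin 3 → R) :
    (a ⬝ᵥ x ⨯₃ y) * (b ⬝ᵥ x ⨯₃ y) =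
      (of fun i j => (![a, x, y] i) ⬝ᵥ (![b, x, y] j)).det := by
  calc _ = (of ![a, x, y]).det * (of ![b, x, y])ᵀ.det := by
        rw [det_transpose, triple_product_eq_det, triple_product_eq_det]; rfl
    _ = _ := (det_mul _ _).symm

theorem dotProduct_cross_mul_dotProduct_cross_of_orthogonal {R : Type*} [CommRing R]
    {a b x y : Fin 3 → R} (ha : a ⬝ᵥ x = 0) (hb : b ⬝ᵥ y = 0) :
    (a ⬝ᵥ x ⨯₃ y) * (b ⬝ᵥ x ⨯₃ y) =
      ((x ⬝ᵥ x) * (y ⬝ᵥ y) - (x ⬝ᵥ y) ^ 2) * (a ⬝ᵥ b) + (x ⬝ᵥ y) * (a ⬝ᵥ y) * (b ⬝ᵥ x) := by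
  rw [dotProduct_cross_mul_dotProduct_cross, det_fin_three]
  simp only [of_apply, cons_val_zero, cons_val_one, cons_val_two, vecHead, vecTail,
    Function.comp_apply, Fin.succ_zero_eq_one, cons_val_fin_one]
  rw [ha, dotProduct_comm y b, hb, dotProduct_comm x b, dotProduct_comm y x]
  ring

theorem EuclideanSpace.real_inner_eq_dotProduct {ι : Type*} [Fintype ι] (u v : EuclideanSpace ℝ ι) :
    ⟪u, v⟫ = WithLp.ofLp u ⬝ᵥ WithLp.ofLp v := by
  rw [EuclideanSpace.inner_eq_star_dotProduct, star_trivial, dotProduct_comm]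

theorem inner_cross_mul_inner_cross_of_orthogonal {a b x y : EuclideanSpace ℝ (Fin 3)}
    (hx : ‖x‖ = 1) (hy : ‖y‖ = 1) (ha : ⟪a, x⟫ = 0) (hb : ⟪b, y⟫ = 0) :
    ⟪a, WithLp.toLp 2 (x ⨯₃ y)⟫ * ⟪b, WithLp.toLp 2 (x ⨯₃ y)⟫ =
      (1 - ⟪x, y⟫ ^ 2) * ⟪a, b⟫ + ⟪x, y⟫ * ⟪a, y⟫ * ⟪b, x⟫ := by
  have hxx : ⟪x, x⟫ = 1 := by rw [real_inner_self_eq_norm_sq, hx, one_pow]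
  have hyy : ⟪y, y⟫ = 1 := by rw [real_inner_self_eq_norm_sq, hy, one_pow]
  simp only [EuclideanSpace.real_inner_eq_dotProduct] at *
  rw [dotProduct_cross_mul_dotProduct_cross_of_orthogonal ha hb, hxx, hyy, one_mul]

theorem sum_normal_products_general (x y : EuclideanSpace ℝ (Fin 3))
    (hx : ‖x‖ = 1) (hy : ‖y‖ = 1)
    (θ : ℝ) (hθ : θ ∈ Set.Ioo 0 π) (hcos : Real.cos θ = ⟪x, y⟫)
    (N : EuclideanSpace ℝ (Fin 3))
    (hN : N = (Real.sin θ)⁻¹ •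
      (WithLp.toLp 2 ![x 1 * y 2 - x 2 * y 1, x 2 * y 0 - x 0 * y 2, x 0 * y 1 - x 1 * y 0] :
        EuclideanSpace ℝ (Fin 3)))
    (g g' : ℝ)  -- the values γ_ℓ(cos θ) and γ'_ℓ(cos θ)
    (D : ℕ)
    (A B : ℕ → EuclideanSpace ℝ (Fin 3))  -- A k = A_{ℓ,k}(x), B k = A_{ℓ,k}(y)
    (htangA : ∀ k, ⟪A k, x⟫ = 0)
    (htangB : ∀ k, ⟪B k, y⟫ = 0)
    (hAB : (2 : ℝ) / D * ∑ k ∈ Finset.range D, ⟪A k, B k⟫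
      = 2 * Real.cos θ * g - Real.sin θ ^ 2 * g')
    (hcross : (2 : ℝ) / D * ∑ k ∈ Finset.range D, ⟪A k, y⟫ * ⟪B k, x⟫
      = -(Real.sin θ ^ 2) * g) :
    (2 : ℝ) / D * ∑ k ∈ Finset.range D, ⟪A k, N⟫ * ⟪B k, N⟫
      = Real.cos θ * g - Real.sin θ ^ 2 * g' := by
  have hsin : sin θ ≠ 0 := (sin_pos_of_pos_of_lt_pi hθ.1 hθ.2).ne'
  have hN' : N = (sin θ)⁻¹ • WithLp.toLp 2 (x ⨯₃ y) := by rw [hN, cross_apply]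
  have hnormal : ∀ k, ⟪A k, N⟫ * ⟪B k, N⟫ =
      ⟪A k, B k⟫ + cos θ / sin θ ^ 2 * (⟪A k, y⟫ * ⟪B k, x⟫) := fun k => by
    rw [hN', inner_smul_right, inner_smul_right, mul_mul_mul_comm,
      inner_cross_mul_inner_cross_of_orthogonal hx hy (htangA k) (htangB k), ← hcos, ← sin_sq]
    field_simp
  have hsum : ∑ k ∈ Finset.range D, ⟪A k, N⟫ * ⟪B k, N⟫ = ∑ k ∈ Finset.range D, ⟪A k, B k⟫ +
      cos θ / sin θ ^ 2 * ∑ k ∈ Finset.range D, ⟪A k, y⟫ * ⟪B k, x⟫ := by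
    rw [Finset.mul_sum, ← Finset.sum_add_distrib]
    exact Finset.sum_congr rfl fun k _ => hnormal k
  have hcancel : cos θ / sin θ ^ 2 * sin θ ^ 2 = cos θ := div_mul_cancel₀ _ (pow_ne_zero 2 hsin)
  rw [hsum]
  linear_combination hAB + cos θ / sin θ ^ 2 * hcross - g * hcancel

/-- Lemma 5.2, second identity: with tangency `⟪A_k,x⟫ = ⟪B_k,y⟫ = 0` and the sums
`(2/D) Σ_k ⟪A_k,B_k⟫ = 2cos θ γ_ℓ(cos θ) − sin²θ γ'_ℓ(cos θ)` and
`(2/D) Σ_k ⟪A_k,y⟫⟪B_k,x⟫ = −sin²θ γ_ℓ(cos θ)`, one has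
`(2/D) Σ_k ⟪A_k,N⟫⟪B_k,N⟫ = cos θ γ_ℓ(cos θ) − sin²θ γ'_ℓ(cos θ)`,
where `N = (x×y)/sin θ`. -/
theorem sum_normal_products (x y : EuclideanSpace ℝ (Fin 3))
    (hx : ‖x‖ = 1) (hy : ‖y‖ = 1) (hne : x ≠ y) (hne' : x ≠ -y)
    (θ : ℝ) (hθ : θ ∈ Set.Ioo 0 π) (hcos : Real.cos θ = ⟪x, y⟫)
    (N : EuclideanSpace ℝ (Fin 3))
    (hN : N = (Real.sin θ)⁻¹ •
      (WithLp.toLp 2 ![x 1 * y 2 - x 2 * y 1, x 2 * y 0 - x 0 * y 2, x 0 * y 1 - x 1 * y 0] :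
        EuclideanSpace ℝ (Fin 3)))
    (g g' : ℝ)  -- the values γ_ℓ(cos θ) and γ'_ℓ(cos θ)
    (D : ℕ) (hD : 0 < D)
    (A B : ℕ → EuclideanSpace ℝ (Fin 3))  -- A k = A_{ℓ,k}(x), B k = A_{ℓ,k}(y)
    (htangA : ∀ k, ⟪A k, x⟫ = 0)
    (htangB : ∀ k, ⟪B k, y⟫ = 0)
    (hAB : (2 : ℝ) / D * ∑ k ∈ Finset.range D, ⟪A k, B k⟫
      = 2 * Real.cos θ * g - Real.sin θ ^ 2 * g')
    (hcross : (2 : ℝ) / D * ∑ k ∈ Finset.range D, ⟪A k, y⟫ * ⟪B k, x⟫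
      = -(Real.sin θ ^ 2) * g) :
    (2 : ℝ) / D * ∑ k ∈ Finset.range D, ⟪A k, N⟫ * ⟪B k, N⟫
      = Real.cos θ * g - Real.sin θ ^ 2 * g' :=
  sum_normal_products_general x y hx hy θ hθ hcos N hN g g' D A B htangA htangB hAB hcross
end

section
/- Let K > 0, α ∈ (0,2), and suppose G: (0,π) → ℝ is differentiable with lim_{θ→0⁺} (G(0)−G(θ))/θ^α = K G(0) and lim_{θ→0⁺} G'(θ)/θ^{α−1} = −α K G(0), where G(0) = 2c > 0. Then for σ²(θ) = 2ν + (2ν/c) cot²θ[G(0)−G(θ)] − (2ν/c) cot θ G'(θ), one has lim_{θ→0⁺} σ²(θ)/θ^{α−2} = 4ν K (1+α); in particular σ²(θ) → +∞ as θ → 0⁺. -/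
open Real Filter Topology

/-! Multiplying `σ²(θ)` by `θ^{2-α}` turns it into
`2ν θ^{2-α} + (2ν/c) (θ cot θ)² (G(0) - G(θ))/θ^α - (2ν/c) (θ cot θ) G'(θ)/θ^{α-1}`,
and each factor has a limit: `θ^{2-α} → 0` since `α < 2`, `θ cot θ → 1`, and the two quotients
tend to `K G(0)` and `-α K G(0)` by hypothesis. With `G(0) = 2c` the limit is `4νK(1 + α) > 0`,
and since `θ^{α-2} → ∞` so does `σ²`. -/

lemma tendsto_cos_div_sin_mul_self_nhdsNE :
    Tendsto (fun θ : ℝ => cos θ / sin θ * θ) (𝓝[≠] 0) (𝓝 1) := by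
  have h : Tendsto (fun θ => cos θ / sinc θ) (𝓝 0) (𝓝 (cos 0 / sinc 0)) :=
    (continuous_cos.continuousAt.div continuous_sinc.continuousAt (by simp [sinc_zero])).tendsto
  rw [cos_zero, sinc_zero, div_one] at h
  refine (h.mono_left nhdsWithin_le_nhds).congr' ?_
  filter_upwards [self_mem_nhdsWithin] with θ hθ
  rw [sinc_of_ne_zero hθ, div_div_eq_mul_div, mul_div_right_comm]

lemma tendsto_rpow_nhdsGT_zero_of_pos {y : ℝ} (hy : 0 < y) :
    Tendsto (fun x : ℝ => x ^ y) (𝓝[>] 0) (𝓝 0) := by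
  simpa [zero_rpow hy.ne'] using
    (continuousAt_rpow_const 0 y (Or.inr hy.le)).tendsto.mono_left nhdsWithin_le_nhds

lemma div_rpow_sub_two_eq {θ : ℝ} (hθ : 0 < θ) (α A k u a b : ℝ) :
    (A + k * u ^ 2 * a - k * u * b) / θ ^ (α - 2) =
      A * θ ^ (2 - α) + k * (u * θ) ^ 2 * (a / θ ^ α) - k * (u * θ) * (b / θ ^ (α - 1)) := by
  have hα : θ ^ α ≠ 0 := (rpow_pos_of_pos hθ α).ne'
  rw [rpow_sub hθ, rpow_sub hθ, rpow_sub hθ, rpow_one, rpow_two]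
  field_simp

theorem sigma_sq_holder_asymptotics_general (ν c K α : ℝ) (hν : 0 < ν) (hK : 0 < K)
    (hα : α ∈ Set.Ioo (0:ℝ) 2)
    (G G' : ℝ → ℝ)
    (hc : G 0 = 2 * c) (hcpos : 0 < c)
    (hlim1 : Tendsto (fun θ => (G 0 - G θ) / θ ^ α) (𝓝[>] 0) (𝓝 (K * G 0)))
    (hlim2 : Tendsto (fun θ => G' θ / θ ^ (α - 1)) (𝓝[>] 0) (𝓝 (-(α * K * G 0))))
    (σsq : ℝ → ℝ)
    (hσ : ∀ θ, σsq θ = 2 * ν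
      + (2 * ν / c) * (Real.cos θ / Real.sin θ) ^ 2 * (G 0 - G θ)
      - (2 * ν / c) * (Real.cos θ / Real.sin θ) * G' θ) :
    Tendsto (fun θ => σsq θ / θ ^ (α - 2)) (𝓝[>] 0) (𝓝 (4 * ν * K * (1 + α))) ∧
      Tendsto σsq (𝓝[>] 0) atTop := by
  obtain ⟨hα0, hα2⟩ := hα
  have hcot := tendsto_cos_div_sin_mul_self_nhdsNE.mono_left (nhdsGT_le_nhdsNE 0)
  have hrescaled : Tendsto (fun θ => σsq θ / θ ^ (α - 2)) (𝓝[>] 0) (𝓝 (4 * ν * K * (1 + α))) := by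
    have hlim := (((tendsto_const_nhds (x := 2 * ν)).mul
      (tendsto_rpow_nhdsGT_zero_of_pos (sub_pos.2 hα2))).add
      (((tendsto_const_nhds (x := 2 * ν / c)).mul (hcot.pow 2)).mul hlim1)).sub
      (((tendsto_const_nhds (x := 2 * ν / c)).mul hcot).mul hlim2)
    refine (hlim.congr' ?_).mono_right (le_of_eq (congrArg 𝓝 ?_))
    · filter_upwards [self_mem_nhdsWithin] with θ (hθ : 0 < θ)
      rw [hσ, div_rpow_sub_two_eq hθ]
    · rw [hc]
      field_simp
      ring
  refine ⟨hrescaled, (hrescaled.pos_mul_atTop (by positivity)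
    (tendsto_rpow_neg_nhdsGT_zero (sub_neg.2 hα2))).congr' ?_⟩
  filter_upwards [self_mem_nhdsWithin] with θ (hθ : 0 < θ)
  exact div_mul_cancel₀ _ (rpow_pos_of_pos hθ _).ne'

/-- In the Hölder regime: if `(G(0)−G(θ))/θ^α → K G(0)` and `G'(θ)/θ^{α−1} → −αK G(0)`
as `θ → 0⁺`, with `G(0) = 2c > 0`, `K > 0` and `α ∈ (0,2)`, then
`σ²(θ) = 2ν + (2ν/c) cot²θ[G(0)−G(θ)] − (2ν/c) cot θ G'(θ)` satisfies
`σ²(θ)/θ^{α−2} → 4νK(1+α)`; in particular `σ²(θ) → +∞` as `θ → 0⁺`. -/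
theorem sigma_sq_holder_asymptotics (ν c K α : ℝ) (hν : 0 < ν) (hK : 0 < K)
    (hα : α ∈ Set.Ioo (0:ℝ) 2)
    (G G' : ℝ → ℝ)
    (hG'deriv : ∀ θ ∈ Set.Ioo (0:ℝ) π, HasDerivAt G (G' θ) θ)
    (hc : G 0 = 2 * c) (hcpos : 0 < c)
    (hlim1 : Tendsto (fun θ => (G 0 - G θ) / θ ^ α) (𝓝[>] 0) (𝓝 (K * G 0)))
    (hlim2 : Tendsto (fun θ => G' θ / θ ^ (α - 1)) (𝓝[>] 0) (𝓝 (-(α * K * G 0))))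
    (σsq : ℝ → ℝ)
    (hσ : ∀ θ, σsq θ = 2 * ν
      + (2 * ν / c) * (Real.cos θ / Real.sin θ) ^ 2 * (G 0 - G θ)
      - (2 * ν / c) * (Real.cos θ / Real.sin θ) * G' θ) :
    Tendsto (fun θ => σsq θ / θ ^ (α - 2)) (𝓝[>] 0) (𝓝 (4 * ν * K * (1 + α))) ∧
      Tendsto σsq (𝓝[>] 0) atTop :=
  sigma_sq_holder_asymptotics_general ν c K α hν hK hα G G' hc hcpos hlim1 hlim2 σsq hσ
end
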